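/- Let m_k, m_l be real numbers and let v, ṽ : ℝ × ℝ² → ℝ be smooth functions. Set h = (□ + m_k²) v and h̃ = (□ + m_l²) ṽ. Then the exact identity □ Q₀(v, ṽ) = −(m_k² + m_l²) Q₀(v, ṽ) + 2 m_k² m_l² v ṽ + Q₀(h, ṽ) + Q₀(v, h̃) + 2 h h̃ − 2 m_k² v h̃ − 2 m_l² h ṽ + 2 Σ_{a,b=0}^{2} Σ_{c,d=0}^{2} η_{ab} η_{cd} Q_{cb}(∂_a v, ∂_d ṽ) holds pointwise on ℝ × ℝ². -/

import Mathlib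

/- Coordinates on ℝ × ℝ² are encoded as points `x : Fin 3 → ℝ` with
`t = x 0`, `x₁ = x 1`, `x₂ = x 2`. -/

/-- The partial derivative `∂ₐ`. -/
noncomputable def pd (a : Fin 3) (f : (Fin 3 → ℝ) → ℝ) : (Fin 3 → ℝ) → ℝ :=
  fun x => fderiv ℝ f x (Pi.single a 1)

/-- The d'Alembertian `□ = ∂₀² - ∂₁² - ∂₂²`. -/
noncomputable def dAlembert (f : (Fin 3 → ℝ) → ℝ) : (Fin 3 → ℝ) → ℝ :=
  fun x => pd 0 (pd 0 f) x - pd 1 (pd 1 f) x - pd 2 (pd 2 f) x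

/-- The null form `Q₀(φ, ψ) = -Σ_{a,b} η_{ab} (∂_a φ)(∂_b ψ)`. -/
noncomputable def Q0 (f g : (Fin 3 → ℝ) → ℝ) : (Fin 3 → ℝ) → ℝ :=
  fun x => pd 0 f x * pd 0 g x - pd 1 f x * pd 1 g x - pd 2 f x * pd 2 g x

/-- The strong null forms `Q_{ab}(φ, ψ) = (∂_a φ)(∂_b ψ) - (∂_b φ)(∂_a ψ)`. -/
noncomputable def Qab (a b : Fin 3) (f g : (Fin 3 → ℝ) → ℝ) : (Fin 3 → ℝ) → ℝ :=
  fun x => pd a f x * pd b g x - pd b f x * pd a g x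

/-- The Minkowski metric coefficients `(η_{ab}) = diag(-1, 1, 1)`. -/
def eta (a b : Fin 3) : ℝ := if a = b then (if a = 0 then -1 else 1) else 0

lemma contDiff_pd {f : (Fin 3 → ℝ) → ℝ} (hf : ContDiff ℝ (⊤ : ℕ∞) f) (a : Fin 3) :
    ContDiff ℝ (⊤ : ℕ∞) (pd a f) :=
  (hf.fderiv_right (by simp)).clm_apply contDiff_const

lemma pdF_sub {f g : (Fin 3 → ℝ) → ℝ} (hf : ContDiff ℝ (⊤ : ℕ∞) f) (hg : ContDiff ℝ (⊤ : ℕ∞) g) (a : Fin 3) :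
    pd a (fun y => f y - g y) = fun y => pd a f y - pd a g y := by
  funext x
  simp only [pd, fderiv_fun_sub (hf.differentiable (by simp) x) (hg.differentiable (by simp) x),
    ContinuousLinearMap.sub_apply]

lemma pdF_add {f g : (Fin 3 → ℝ) → ℝ} (hf : ContDiff ℝ (⊤ : ℕ∞) f) (hg : ContDiff ℝ (⊤ : ℕ∞) g) (a : Fin 3) :
    pd a (fun y => f y + g y) = fun y => pd a f y + pd a g y := by
  funext x
  simp only [pd, fderiv_fun_add (hf.differentiable (by simp) x) (hg.differentiable (by simp) x),
    ContinuousLinearMap.add_apply]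

lemma pdF_mul {f g : (Fin 3 → ℝ) → ℝ} (hf : ContDiff ℝ (⊤ : ℕ∞) f) (hg : ContDiff ℝ (⊤ : ℕ∞) g) (a : Fin 3) :
    pd a (fun y => f y * g y) = fun y => pd a f y * g y + f y * pd a g y := by
  funext x
  simp only [pd, fderiv_fun_mul (hf.differentiable (by simp) x) (hg.differentiable (by simp) x),
    ContinuousLinearMap.add_apply, ContinuousLinearMap.smul_apply, smul_eq_mul]
  ring

lemma pdF_const_mul {g : (Fin 3 → ℝ) → ℝ} (hg : ContDiff ℝ (⊤ : ℕ∞) g) (c : ℝ) (a : Fin 3) :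
    pd a (fun y => c * g y) = fun y => c * pd a g y := by
  funext x
  simp only [pd, fderiv_const_mul (hg.differentiable (by simp) x) c,
    ContinuousLinearMap.smul_apply, smul_eq_mul]

lemma pd_comm {f : (Fin 3 → ℝ) → ℝ} (hf : ContDiff ℝ (⊤ : ℕ∞) f) (a b : Fin 3) :
    pd a (pd b f) = pd b (pd a f) := by
  funext x
  have hdd : DifferentiableAt ℝ (fderiv ℝ f) x :=
    ((hf.fderiv_right (m := (⊤ : ℕ∞)) (by simp)).differentiable (by simp) x)
  have key : ∀ c d : Fin 3,
      pd c (pd d f) x = fderiv ℝ (fderiv ℝ f) x (Pi.single c 1) (Pi.single d 1) := by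
    intro c d
    show fderiv ℝ (fun y => fderiv ℝ f y (Pi.single d 1)) x (Pi.single c 1) = _
    rw [fderiv_clm_apply hdd (differentiableAt_const _)]
    simp
  rw [key a b, key b a]
  exact second_derivative_symmetric (fun y => (hf.differentiable (by simp) y).hasFDerivAt)
    hdd.hasFDerivAt _ _

lemma pd_comm10 {f : (Fin 3 → ℝ) → ℝ} (hf : ContDiff ℝ (⊤ : ℕ∞) f) :
    pd 1 (pd 0 f) = pd 0 (pd 1 f) := pd_comm hf 1 0
lemma pd_comm20 {f : (Fin 3 → ℝ) → ℝ} (hf : ContDiff ℝ (⊤ : ℕ∞) f) :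
    pd 2 (pd 0 f) = pd 0 (pd 2 f) := pd_comm hf 2 0
lemma pd_comm21 {f : (Fin 3 → ℝ) → ℝ} (hf : ContDiff ℝ (⊤ : ℕ∞) f) :
    pd 2 (pd 1 f) = pd 1 (pd 2 f) := pd_comm hf 2 1

lemma pdF_const (c : ℝ) (a : Fin 3) : pd a (fun _ : Fin 3 → ℝ => c) = fun _ => 0 := by
  funext x
  simp [pd]

lemma eta00 : eta 0 0 = -1 := rfl
lemma eta11 : eta 1 1 = 1 := rfl
lemma eta22 : eta 2 2 = 1 := rfl
lemma eta01 : eta 0 1 = 0 := rfl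
lemma eta02 : eta 0 2 = 0 := rfl
lemma eta10 : eta 1 0 = 0 := rfl
lemma eta12 : eta 1 2 = 0 := rfl
lemma eta20 : eta 2 0 = 0 := rfl
lemma eta21 : eta 2 1 = 0 := rfl

lemma Q0_def (f g : (Fin 3 → ℝ) → ℝ) :
    Q0 f g = fun x => pd 0 f x * pd 0 g x - pd 1 f x * pd 1 g x - pd 2 f x * pd 2 g x := rfl

set_option maxHeartbeats 2000000 in
/-- for smooth `v, ṽ`, with `h = (□ + m_k²) v` and
`h̃ = (□ + m_l²) ṽ`, the exact identity
`□ Q₀(v, ṽ) = -(m_k² + m_l²) Q₀(v, ṽ) + 2 m_k² m_l² v ṽ + Q₀(h, ṽ) + Q₀(v, h̃)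
  + 2 h h̃ - 2 m_k² v h̃ - 2 m_l² h ṽ
  + 2 Σ_{a,b=0}^{2} Σ_{c,d=0}^{2} η_{ab} η_{cd} Q_{cb}(∂_a v, ∂_d ṽ)`
holds pointwise. -/
theorem box_of_Q0_with_sources (mk ml : ℝ) (v vt : (Fin 3 → ℝ) → ℝ)
    (hv : ContDiff ℝ (⊤ : ℕ∞) v) (hvt : ContDiff ℝ (⊤ : ℕ∞) vt) (x : Fin 3 → ℝ) :
    dAlembert (Q0 v vt) x
      = -(mk ^ 2 + ml ^ 2) * Q0 v vt x + 2 * mk ^ 2 * ml ^ 2 * (v x * vt x)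
        + Q0 (fun y => dAlembert v y + mk ^ 2 * v y) vt x
        + Q0 v (fun y => dAlembert vt y + ml ^ 2 * vt y) x
        + 2 * (dAlembert v x + mk ^ 2 * v x) * (dAlembert vt x + ml ^ 2 * vt x)
        - 2 * mk ^ 2 * (v x * (dAlembert vt x + ml ^ 2 * vt x))
        - 2 * ml ^ 2 * ((dAlembert v x + mk ^ 2 * v x) * vt x)
        + 2 * ∑ a : Fin 3, ∑ b : Fin 3, ∑ c : Fin 3, ∑ d : Fin 3,
            eta a b * eta c d * Qab c b (pd a v) (pd d vt) x := by
  simp only [dAlembert, Q0_def, Q0, Qab, Fin.sum_univ_three]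
  simp (config := { maxDischargeDepth := 12 }) only [pdF_sub, pdF_add, pdF_mul, pdF_const_mul, pdF_const, contDiff_pd, hv, hvt,
    ContDiff.sub, ContDiff.add, ContDiff.mul, contDiff_const]
  simp (config := { maxDischargeDepth := 12 }) only [pd_comm10, pd_comm20, pd_comm21, contDiff_pd, hv, hvt]
  simp only [eta00, eta11, eta22, eta01, eta02, eta10, eta12, eta20, eta21]
  ring
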